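/- arXiv:1608.06062 — 6 statements merged into one kernel-verified Lean document; each statement's English description precedes it below -/
import Mathlib

section
/- Let a, b, c be positive integers, let 𝐢 = (1,2,1), 𝐚 = (a,b,c), and let D = diag(a,b,c). Then q(A) < 0 for every matrix A ∈ 𝓜_{𝐢,𝐚} with A ≠ D if and only if 2b ≥ a + c. (This is the quadratic-form criterion underlying the fact that the monomial E₁^{(a)}E₂^{(b)}E₁^{(c)} in U_v⁺(ŝl₂) is tight if and only if 2b ≥ a + c.) -/
/-- The Euler form `⟨i,j⟩` of the Kronecker quiver Cartan datum on `I = {1,2}`: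
`⟨1,1⟩ = ⟨2,2⟩ = 1`, `⟨1,2⟩ = -2`, `⟨2,1⟩ = 0`. -/
def kroneckerAngle : ℕ → ℕ → ℤ
  | 1, 1 => 1
  | 2, 2 => 1
  | 1, 2 => -2
  | 2, 1 => 0
  | _, _ => 0

/-- The symmetric bilinear form `i · j = ⟨i,j⟩ + ⟨j,i⟩`. -/
def kroneckerDot (i j : ℕ) : ℤ := kroneckerAngle i j + kroneckerAngle j i

/-- The quadratic form `q(A)` associated to a sequence `iseq = (i₁,…,i_t)` and a `t × t`
matrix `A` with natural number entries:
`q(A) = ∑_{m} ∑_{p<r} ⟨i_m,i_m⟩ a_{p,m} a_{r,m} + ∑_{p<r, l<m} (i_l·i_m) a_{p,m} a_{r,l}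
      + ∑_{r} ∑_{l<m} ⟨i_r,i_r⟩ a_{r,m} a_{r,l}`. -/
def qform {t : ℕ} (iseq : Fin t → ℕ) (A : Matrix (Fin t) (Fin t) ℕ) : ℤ :=
  (∑ m : Fin t, ∑ p : Fin t, ∑ r : Fin t,
      if p < r then kroneckerAngle (iseq m) (iseq m) * (A p m : ℤ) * (A r m : ℤ) else 0)
  + (∑ p : Fin t, ∑ r : Fin t, ∑ l : Fin t, ∑ m : Fin t,
      if p < r ∧ l < m then kroneckerDot (iseq l) (iseq m) * (A p m : ℤ) * (A r l : ℤ) else 0)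
  + (∑ r : Fin t, ∑ l : Fin t, ∑ m : Fin t,
      if l < m then kroneckerAngle (iseq r) (iseq r) * (A r m : ℤ) * (A r l : ℤ) else 0)

/-- `A ∈ 𝓜_{iseq,aseq}`: all row and column sums of `A` are prescribed by `aseq`, and
`a_{r,m} = 0` unless `i_r = i_m`. -/
def MemM {t : ℕ} (iseq : Fin t → ℕ) (aseq : Fin t → ℕ) (A : Matrix (Fin t) (Fin t) ℕ) : Prop :=
  (∀ r, ∑ m, A r m = aseq r) ∧ (∀ r, ∑ m, A m r = aseq r) ∧
    (∀ r m, iseq r ≠ iseq m → A r m = 0)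

lemma qform_eval (A : Matrix (Fin 3) (Fin 3) ℕ)
    (h01 : A 0 1 = 0) (h10 : A 1 0 = 0) (h12 : A 1 2 = 0) (h21 : A 2 1 = 0) :
    qform ![1, 2, 1] A =
      (A 0 0 : ℤ) * A 0 2 + A 0 0 * A 2 0 + 2 * A 0 2 * A 2 0 + A 0 2 * A 2 2
        + A 2 0 * A 2 2 - 2 * A 0 2 * A 1 1 - 2 * A 2 0 * A 1 1 := by
  have e11 : kroneckerAngle 1 1 = 1 := rfl
  have e22 : kroneckerAngle 2 2 = 1 := rfl
  have d12 : kroneckerDot 1 2 = -2 := rfl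
  have d21 : kroneckerDot 2 1 = -2 := rfl
  have d11 : kroneckerDot 1 1 = 2 := rfl
  have d22 : kroneckerDot 2 2 = 2 := rfl
  simp [qform, Fin.sum_univ_three, h01, h10, h12, h21, e11, e22, d12, d21, d11, d22,
    show ((0:Fin 3) < 1) = True by simp, show ((0:Fin 3) < 2) = True by simp [Fin.lt_def],
    show ((1:Fin 3) < 2) = True by simp [Fin.lt_def]]
  ring


/-- For positive integers `a, b, c`, with `iseq = (1,2,1)` and `aseq = (a,b,c)`, the quadratic
form `q` is negative on every matrix of `𝓜_{iseq,aseq}` other than `diag(a,b,c)` if and only if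
`2b ≥ a + c`. -/
theorem tight_criterion_three_terms (a b c : ℕ) (ha : 0 < a) (hb : 0 < b) (hc : 0 < c) :
    (∀ A : Matrix (Fin 3) (Fin 3) ℕ,
        MemM ![1, 2, 1] ![a, b, c] A → A ≠ Matrix.diagonal ![a, b, c] →
          qform ![1, 2, 1] A < 0)
      ↔ a + c ≤ 2 * b := by
  constructor
  · intro h
    by_contra hle
    push_neg at hle
    set A : Matrix (Fin 3) (Fin 3) ℕ := !![a-1, 0, 1; 0, b, 0; 1, 0, c-1] with hA
    have hmem : MemM ![1, 2, 1] ![a, b, c] A := by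
      refine ⟨?_, ?_, ?_⟩
      · intro r
        fin_cases r <;> simp [hA, Fin.sum_univ_three] <;> omega
      · intro r
        fin_cases r <;> simp [hA, Fin.sum_univ_three] <;> omega
      · intro r m hrm
        fin_cases r <;> fin_cases m <;> first | exact absurd rfl hrm | rfl
    have hne : A ≠ Matrix.diagonal ![a, b, c] := by
      intro hEq
      have h02 : A 0 2 = Matrix.diagonal ![a, b, c] 0 2 := by rw [hEq]
      rw [Matrix.diagonal_apply_ne _ (by decide : (0 : Fin 3) ≠ 2)] at h02
      exact one_ne_zero h02
    have hq := h A hmem hne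
    rw [qform_eval A rfl rfl rfl rfl] at hq
    have e00 : A 0 0 = a - 1 := rfl
    have e02 : A 0 2 = 1 := rfl
    have e20 : A 2 0 = 1 := rfl
    have e22 : A 2 2 = c - 1 := rfl
    have e11 : A 1 1 = b := rfl
    rw [e00, e02, e20, e22, e11] at hq
    omega
  · intro hle A hmem hne
    obtain ⟨hrow, hcol, hz⟩ := hmem
    have h01 : A 0 1 = 0 := hz 0 1 (by decide)
    have h10 : A 1 0 = 0 := hz 1 0 (by decide)
    have h12 : A 1 2 = 0 := hz 1 2 (by decide)
    have h21 : A 2 1 = 0 := hz 2 1 (by decide)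
    have hr0 : A 0 0 + A 0 1 + A 0 2 = a := by simpa [Fin.sum_univ_three] using hrow 0
    have hr1 : A 1 0 + A 1 1 + A 1 2 = b := by simpa [Fin.sum_univ_three] using hrow 1
    have hr2 : A 2 0 + A 2 1 + A 2 2 = c := by simpa [Fin.sum_univ_three] using hrow 2
    have hc0 : A 0 0 + A 1 0 + A 2 0 = a := by simpa [Fin.sum_univ_three] using hcol 0
    have hk : A 0 2 ≠ 0 := by
      intro hk0
      apply hne
      have h20 : A 2 0 = 0 := by omega
      ext i j
      fin_cases i <;> fin_cases j <;>
        simp [Matrix.diagonal, h01, h10, h12, h21, hk0, h20] <;> omega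
    have hqe := qform_eval A h01 h10 h12 h21
    have hx : (A 0 0 : ℤ) = a - A 0 2 := by omega
    have hw : (A 2 2 : ℤ) = c - A 0 2 := by omega
    have hB : (A 1 1 : ℤ) = b := by omega
    have h20 : (A 2 0 : ℤ) = A 0 2 := by omega
    rw [hx, hw, hB, h20] at hqe
    have hfact : qform ![1, 2, 1] A
        = 2 * (A 0 2 : ℤ) * ((a : ℤ) + c - 2 * b - A 0 2) := by rw [hqe]; ring
    rw [hfact]
    have hkpos : 0 < (A 0 2 : ℤ) := by exact_mod_cast Nat.pos_of_ne_zero hk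
    have hneg : (a : ℤ) + c - 2 * b - A 0 2 < 0 := by
      have : (a : ℤ) + c ≤ 2 * b := by exact_mod_cast hle
      omega
    exact mul_neg_of_pos_of_neg (by linarith) hneg
end

section
/- Let a, b, c, d be positive integers, let 𝐢 = (1,2,1,2), 𝐚 = (a,b,c,d), and let D = diag(a,b,c,d). Then q(A) < 0 for every matrix A ∈ 𝓜_{𝐢,𝐚} with A ≠ D if and only if 2b ≥ a + c and 2c ≥ b + d with at least one of these two inequalities strict. (This is the quadratic-form criterion underlying the fact that the monomial E₁^{(a)}E₂^{(b)}E₁^{(c)}E₂^{(d)} in U_v⁺(ŝl₂) is tight if and only if 2b ≥ a + c and 2c ≥ b + d, at least one strictly.) -/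
set_option maxHeartbeats 1000000 in
set_option maxRecDepth 100000 in
lemma qform_explicit (e00 e02 e20 e22 e11 e13 e31 e33 : ℕ) :
    qform ![1,2,1,2] ![![e00,0,e02,0],![0,e11,0,e13],![e20,0,e22,0],![0,e31,0,e33]]
      = (e31:ℤ)*e33 + e13*e33 + 2*e13*e31 + e11*e31 + e11*e13 - 2*e22*e31 - 2*e22*e13
        - 2*e20*e13 - 2*e20*e11 + e20*e22 - 2*e02*e31 - 2*e02*e11 + e02*e22
        + 2*e02*e20 + e00*e20 + e00*e02 := by
  simp only [qform, Fin.sum_univ_four]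
  norm_num [Matrix.cons_val_zero, Matrix.cons_val_one, Matrix.head_cons,
    Matrix.cons_val_two, Matrix.tail_cons, Matrix.cons_val_three, Matrix.head_fin_const,
    Fin.lt_def, kroneckerAngle, kroneckerDot]
  norm_num
  ring

lemma qval (a b c d x y : ℕ) (hx1 : x ≤ a) (hx2 : x ≤ c) (hy1 : y ≤ b) (hy2 : y ≤ d) :
    qform ![1,2,1,2] ![![a-x,0,x,0],![0,b-y,0,y],![x,0,c-x,0],![0,y,0,d-y]]
      = -2*((x:ℤ)-y)^2 - 2*x*(2*b-a-c) - 2*y*(2*c-b-d) := by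
  rw [qform_explicit]
  push_cast [Nat.cast_sub hx1, Nat.cast_sub hx2, Nat.cast_sub hy1, Nat.cast_sub hy2]
  ring

lemma mem_helper (a b c d x y : ℕ) (hx1 : x ≤ a) (hx2 : x ≤ c) (hy1 : y ≤ b) (hy2 : y ≤ d) :
    MemM ![1,2,1,2] ![a,b,c,d] ![![a-x,0,x,0],![0,b-y,0,y],![x,0,c-x,0],![0,y,0,d-y]] := by
  refine ⟨?_, ?_, ?_⟩
  · intro r; fin_cases r <;> simp [Fin.sum_univ_four] <;> omega
  · intro r; fin_cases r <;> simp [Fin.sum_univ_four] <;> omega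
  · intro r m hrm; fin_cases r <;> fin_cases m <;> simp_all


lemma neg_key (X Y P Q : ℤ) (hX : 0 ≤ X) (hY : 0 ≤ Y) (hP : 0 ≤ P) (hQ : 0 ≤ Q)
    (hPQ : 1 ≤ P + Q) (hXY : 1 ≤ X + Y) : -2*(X-Y)^2 - 2*X*P - 2*Y*Q < 0 := by
  rcases eq_or_ne X Y with h | h
  · subst h
    have hX1 : 1 ≤ X := by omega
    nlinarith
  · have h1 : X - Y ≠ 0 := sub_ne_zero.mpr h
    have h2 := Int.one_le_abs h1
    have h3 : 1 ≤ (X - Y)^2 := by nlinarith [sq_abs (X - Y)]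
    nlinarith [mul_nonneg hX hP, mul_nonneg hY hQ]

set_option maxHeartbeats 2000000 in
set_option maxRecDepth 100000 in
/-- For positive integers `a, b, c, d`, with `iseq = (1,2,1,2)` and `aseq = (a,b,c,d)`, the
quadratic form `q` is negative on every matrix of `𝓜` other than `diag(a,b,c,d)` if and only
if `2b ≥ a + c` and `2c ≥ b + d`, with at least one of the two inequalities strict. -/
theorem tight_criterion_four_terms (a b c d : ℕ)
    (ha : 0 < a) (hb : 0 < b) (hc : 0 < c) (hd : 0 < d) :
    (∀ A : Matrix (Fin 4) (Fin 4) ℕ,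
        MemM ![1, 2, 1, 2] ![a, b, c, d] A → A ≠ Matrix.diagonal ![a, b, c, d] →
          qform ![1, 2, 1, 2] A < 0)
      ↔ (a + c ≤ 2 * b ∧ b + d ≤ 2 * c ∧ (a + c < 2 * b ∨ b + d < 2 * c)) := by
  constructor
  · intro h
    have ne1 : ∀ x y : ℕ, x ≠ 0 →
        (![![a-x,0,x,0],![0,b-y,0,y],![x,0,c-x,0],![0,y,0,d-y]] :
          Matrix (Fin 4) (Fin 4) ℕ) ≠ Matrix.diagonal ![a,b,c,d] := by
      intro x y hx heq
      have h02 := congrFun (congrFun heq 0) 2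
      rw [Matrix.diagonal_apply_ne _ (by decide)] at h02
      simp at h02
      exact hx h02
    have ne2 : ∀ x y : ℕ, y ≠ 0 →
        (![![a-x,0,x,0],![0,b-y,0,y],![x,0,c-x,0],![0,y,0,d-y]] :
          Matrix (Fin 4) (Fin 4) ℕ) ≠ Matrix.diagonal ![a,b,c,d] := by
      intro x y hy heq
      have h13 := congrFun (congrFun heq 1) 3
      rw [Matrix.diagonal_apply_ne _ (by decide)] at h13
      simp at h13
      exact hy h13
    have k1 := h _ (mem_helper a b c d 1 0 ha hc (Nat.zero_le _) (Nat.zero_le _))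
      (ne1 1 0 one_ne_zero)
    have k2 := h _ (mem_helper a b c d 0 1 (Nat.zero_le _) (Nat.zero_le _) hb hd)
      (ne2 0 1 one_ne_zero)
    have k3 := h _ (mem_helper a b c d 1 1 ha hc hb hd) (ne1 1 1 one_ne_zero)
    rw [qval a b c d 1 0 ha hc (Nat.zero_le _) (Nat.zero_le _)] at k1
    rw [qval a b c d 0 1 (Nat.zero_le _) (Nat.zero_le _) hb hd] at k2
    rw [qval a b c d 1 1 ha hc hb hd] at k3
    norm_num at k1 k2 k3
    omega
  · rintro ⟨h1, h2, h3⟩ A hA hne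
    obtain ⟨hrow, hcol, hzero⟩ := hA
    have z01 : A 0 1 = 0 := hzero 0 1 (by decide)
    have z03 : A 0 3 = 0 := hzero 0 3 (by decide)
    have z10 : A 1 0 = 0 := hzero 1 0 (by decide)
    have z12 : A 1 2 = 0 := hzero 1 2 (by decide)
    have z21 : A 2 1 = 0 := hzero 2 1 (by decide)
    have z23 : A 2 3 = 0 := hzero 2 3 (by decide)
    have z30 : A 3 0 = 0 := hzero 3 0 (by decide)
    have z32 : A 3 2 = 0 := hzero 3 2 (by decide)
    have r0 := hrow 0; have r1 := hrow 1; have r2 := hrow 2; have r3 := hrow 3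
    have c0 := hcol 0; have c1 := hcol 1; have c2 := hcol 2; have c3 := hcol 3
    simp only [Fin.sum_univ_four, Matrix.cons_val_zero, Matrix.cons_val_one,
      Matrix.head_cons, Matrix.cons_val_two, Matrix.tail_cons,
      Matrix.cons_val_three] at r0 r1 r2 r3 c0 c1 c2 c3
    set x := A 0 2 with hxdef
    set y := A 1 3 with hydef
    have hx1 : x ≤ a := by omega
    have hx2 : x ≤ c := by omega
    have hy1 : y ≤ b := by omega
    have hy2 : y ≤ d := by omega
    have h20 : A 2 0 = x := by omega
    have h31 : A 3 1 = y := by omega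
    have h00 : A 0 0 = a - x := by omega
    have h22 : A 2 2 = c - x := by omega
    have h11 : A 1 1 = b - y := by omega
    have h33 : A 3 3 = d - y := by omega
    have hAeq : A = ![![a-x,0,x,0],![0,b-y,0,y],![x,0,c-x,0],![0,y,0,d-y]] := by
      funext i j
      fin_cases i <;> fin_cases j <;>
        simp only [Matrix.cons_val_zero, Matrix.cons_val_one, Matrix.head_cons,
          Matrix.cons_val_two, Matrix.tail_cons, Matrix.cons_val_three] <;>
        first
          | exact h00 | exact h22 | exact h11 | exact h33 | exact h20 | exact h31
          | exact z01 | exact z03 | exact z10 | exact z12 | exact z21 | exact z23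
          | exact z30 | exact z32 | rfl
    have hxy : x + y ≠ 0 := by
      intro h0
      apply hne
      have hx0 : x = 0 := by omega
      have hy0 : y = 0 := by omega
      rw [hAeq, hx0, hy0]
      funext i j
      fin_cases i <;> fin_cases j <;>
        simp [Matrix.diagonal, Matrix.vecHead, Matrix.vecTail]
    rw [hAeq, qval a b c d x y hx1 hx2 hy1 hy2]
    exact neg_key x y _ _ (Int.natCast_nonneg x) (Int.natCast_nonneg y)
      (by omega) (by omega) (by omega) (by omega)
end

section
/- Let a, b, c, d be natural numbers and let x, y be natural numbers with x ≤ min(a,c) and y ≤ min(b,d). Let A_{x,y} be the 4×4 matrix with rows (a−x, 0, x, 0), (0, b−y, 0, y), (x, 0, c−x, 0), (0, y, 0, d−y). Then for 𝐢 = (1,2,1,2), the quadratic form satisfies q(A_{x,y}) = −2(x−y)² + 2x(a + c − 2b) + 2y(b + d − 2c). -/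
theorem qform_kronecker_block (p q r s x y : ℕ) :
    qform ![1, 2, 1, 2] !![p, 0, x, 0; 0, q, 0, y; x, 0, r, 0; 0, y, 0, s]
      = 2 * (x : ℤ) * (p + x + r) + 2 * (y : ℤ) * (q + y + s) - 4 * (x : ℤ) * (q + y)
          - 4 * (y : ℤ) * r := by
  simp only [qform, Fin.sum_univ_four, Fin.isValue, Matrix.of_apply, Matrix.cons_val',
    Matrix.cons_val_zero, Matrix.cons_val_one, Matrix.cons_val_two, Matrix.cons_val_three,
    Matrix.empty_val', Matrix.cons_val_fin_one]
  norm_num [kroneckerAngle, kroneckerDot, Fin.lt_def]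
  ring

/-- For natural numbers `a, b, c, d` and `x ≤ min a c`, `y ≤ min b d`, with
`iseq = (1,2,1,2)`, the quadratic form of the matrix `A_{x,y}` with rows
`(a-x, 0, x, 0)`, `(0, b-y, 0, y)`, `(x, 0, c-x, 0)`, `(0, y, 0, d-y)` equals
`-2(x-y)² + 2x(a + c - 2b) + 2y(b + d - 2c)`. -/
theorem qform_value_four_terms (a b c d x y : ℕ) (hx : x ≤ min a c) (hy : y ≤ min b d) :
    qform ![1, 2, 1, 2]
        !![a - x, 0, x, 0; 0, b - y, 0, y; x, 0, c - x, 0; 0, y, 0, d - y]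
      = -2 * ((x : ℤ) - (y : ℤ)) ^ 2 + 2 * (x : ℤ) * ((a : ℤ) + (c : ℤ) - 2 * (b : ℤ))
          + 2 * (y : ℤ) * ((b : ℤ) + (d : ℤ) - 2 * (c : ℤ)) := by
  obtain ⟨hxa, hxc⟩ := le_min_iff.mp hx
  obtain ⟨hyb, hyd⟩ := le_min_iff.mp hy
  rw [qform_kronecker_block]
  push_cast [hxa, hxc, hyb, hyd]
  ring
end

section
/- Let a, b, c, d be natural numbers and 𝐢 = (1,2,1,2), 𝐚 = (a,b,c,d). Then a 4×4 matrix A with natural number entries belongs to 𝓜_{𝐢,𝐚} if and only if there exist natural numbers x, y with x ≤ min(a,c) and y ≤ min(b,d) such that A = A_{x,y}, where A_{x,y} is the matrix with rows (a−x, 0, x, 0), (0, b−y, 0, y), (x, 0, c−x, 0), (0, y, 0, d−y). In particular, 𝓜_{𝐢,𝐚} ∖ {diag(a,b,c,d)} = { A_{x,y} : 0 ≤ x ≤ min(a,c), 0 ≤ y ≤ min(b,d), (x,y) ≠ (0,0) }. -/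

lemma main_iff_aux (a b c d : ℕ) (A : Matrix (Fin 4) (Fin 4) ℕ) :
    MemM ![1, 2, 1, 2] ![a, b, c, d] A ↔
      ∃ x y : ℕ, x ≤ min a c ∧ y ≤ min b d ∧
        A = !![a - x, 0, x, 0; 0, b - y, 0, y; x, 0, c - x, 0; 0, y, 0, d - y] := by
  constructor
  · rintro ⟨hrow, hcol, hz⟩
    have z01 : A 0 1 = 0 := hz 0 1 (by decide)
    have z03 : A 0 3 = 0 := hz 0 3 (by decide)
    have z10 : A 1 0 = 0 := hz 1 0 (by decide)
    have z12 : A 1 2 = 0 := hz 1 2 (by decide)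
    have z21 : A 2 1 = 0 := hz 2 1 (by decide)
    have z23 : A 2 3 = 0 := hz 2 3 (by decide)
    have z30 : A 3 0 = 0 := hz 3 0 (by decide)
    have z32 : A 3 2 = 0 := hz 3 2 (by decide)
    have r0 := hrow 0; have r1 := hrow 1; have r2 := hrow 2; have r3 := hrow 3
    have c0 := hcol 0; have c1 := hcol 1; have c2 := hcol 2; have c3 := hcol 3
    simp [Fin.sum_univ_four] at r0 r1 r2 r3 c0 c1 c2 c3
    have e00 : A 0 0 = a - A 0 2 := by omega
    have e11 : A 1 1 = b - A 1 3 := by omega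
    have e20 : A 2 0 = A 0 2 := by omega
    have e22 : A 2 2 = c - A 0 2 := by omega
    have e31 : A 3 1 = A 1 3 := by omega
    have hx : A 0 2 ≤ min a c := by omega
    have hy : A 1 3 ≤ min b d := by omega
    have e33 : A 3 3 = d - A 1 3 := by omega
    refine ⟨A 0 2, A 1 3, hx, hy, ?_⟩
    clear hrow hcol hz r0 r1 r2 r3 c0 c1 c2 c3
    ext i j
    fin_cases i <;> fin_cases j <;> simp_all
  · rintro ⟨x, y, hx, hy, rfl⟩
    refine ⟨?_, ?_, ?_⟩
    · intro r; fin_cases r <;> simp [Fin.sum_univ_four] <;> omega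
    · intro r; fin_cases r <;> simp [Fin.sum_univ_four] <;> omega
    · intro r m h; fin_cases r <;> fin_cases m <;> simp_all

/-- For `iseq = (1,2,1,2)` and `aseq = (a,b,c,d)`, a `4 × 4` matrix over `ℕ` lies in `𝓜` iff
it equals `A_{x,y}` (rows `(a-x,0,x,0)`, `(0,b-y,0,y)`, `(x,0,c-x,0)`, `(0,y,0,d-y)`) for
some `x ≤ min a c`, `y ≤ min b d`; and `𝓜 ∖ {diag(a,b,c,d)}` consists of the `A_{x,y}` with
`x ≤ min a c`, `y ≤ min b d` and `(x,y) ≠ (0,0)`. -/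
theorem memM_iff_four_terms (a b c d : ℕ) :
    (∀ A : Matrix (Fin 4) (Fin 4) ℕ,
        MemM ![1, 2, 1, 2] ![a, b, c, d] A ↔
          ∃ x y : ℕ, x ≤ min a c ∧ y ≤ min b d ∧
            A = !![a - x, 0, x, 0; 0, b - y, 0, y; x, 0, c - x, 0; 0, y, 0, d - y])
    ∧ {A : Matrix (Fin 4) (Fin 4) ℕ |
          MemM ![1, 2, 1, 2] ![a, b, c, d] A ∧ A ≠ Matrix.diagonal ![a, b, c, d]}
        = {A : Matrix (Fin 4) (Fin 4) ℕ |
            ∃ x y : ℕ, x ≤ min a c ∧ y ≤ min b d ∧ (x, y) ≠ (0, 0) ∧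
              A = !![a - x, 0, x, 0; 0, b - y, 0, y; x, 0, c - x, 0; 0, y, 0, d - y]} := by
  constructor
  · intro A; exact main_iff_aux a b c d A
  · ext A
    simp only [Set.mem_setOf_eq]
    constructor
    · rintro ⟨hmem, hne⟩
      obtain ⟨x, y, hx, hy, rfl⟩ := (main_iff_aux a b c d A).mp hmem
      refine ⟨x, y, hx, hy, ?_, rfl⟩
      rintro h0
      obtain ⟨rfl, rfl⟩ : x = 0 ∧ y = 0 := by
        simpa [Prod.ext_iff] using h0
      apply hne
      ext i j
      fin_cases i <;> fin_cases j <;> simp [Matrix.diagonal, Matrix.vecHead, Matrix.vecTail]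
    · rintro ⟨x, y, hx, hy, hne, rfl⟩
      refine ⟨(main_iff_aux a b c d _).mpr ⟨x, y, hx, hy, rfl⟩, ?_⟩
      intro h
      have h02 := congrFun (congrFun h 0) 2
      have h13 := congrFun (congrFun h 1) 3
      simp [Matrix.diagonal] at h02 h13
      exact hne (by simp [h02, h13])
end

section
/- Let m, k, δ be integers with m ≥ k ≥ 1 and δ ≥ 0. Then in ℤ[v, v⁻¹] one has ∑_{i=0}^{δ} (−1)^i v^{i(m−k)} [k−1+i choose k−1] [m choose δ−i] = v^{−kδ} [m−k choose δ]. -/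
open LaurentPolynomial

/-- The Gaussian polynomial `⟦N choose t⟧`, an element of `ℤ[v, v⁻¹]` (here `v = T 1`),
defined via the `q`-Pascal recursion (with `q = v²`):
`⟦N choose 0⟧ = 1`, `⟦0 choose t+1⟧ = 0`,
`⟦N+1 choose t+1⟧ = ⟦N choose t⟧ + v^{2(t+1)} ⟦N choose t+1⟧`.
It equals the product `∏_{i=1}^{t} (v^{2(N−i+1)} − 1)/(v^{2i} − 1)` when `t ≤ N`,
and vanishes when `t > N`. -/
noncomputable def gaussPoly : ℕ → ℕ → LaurentPolynomial ℤ
  | _, 0 => 1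
  | 0, _ + 1 => 0
  | N + 1, t + 1 => gaussPoly N t + T (2 * ((t : ℤ) + 1)) * gaussPoly N (t + 1)

/-- The symmetric Gaussian polynomial `[N choose t] = v^{−t(N−t)} ⟦N choose t⟧`. -/
noncomputable def sgauss (N t : ℕ) : LaurentPolynomial ℤ :=
  T (-((t : ℤ) * ((N : ℤ) - (t : ℤ)))) * gaussPoly N t

/-- The bar involution on `ℤ[v, v⁻¹]`: the ring automorphism fixing `ℤ` and sending
`v ↦ v⁻¹` (substitution `T ↦ T⁻¹`). -/
noncomputable def bar (p : LaurentPolynomial ℤ) : LaurentPolynomial ℤ :=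
  LaurentPolynomial.invert p

/-- `p ∈ v⁻¹ℤ[v⁻¹]`: every monomial `v^m` occurring in `p` with nonzero coefficient has
`m ≤ −1`. -/
def InNegPart (p : LaurentPolynomial ℤ) : Prop :=
  ∀ m : ℤ, p.coeff m ≠ 0 → m < 0

/-
Write `q = v²`, `k = κ + 1` and `m = κ + 1 + r`. The sum is `v^{-δ(m-δ)}` times
`A(κ, r, δ) = ∑_{i ≤ δ} (-1)^i q^{i(r-δ) + i(i+1)/2} ⟦κ+i choose κ⟧ ⟦m choose δ-i⟧`
(`altGaussSum` below), so it suffices to show `A(κ, r, δ) = ⟦r choose δ⟧`.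
For `κ = 0` the sum telescopes by the dual `q`-Pascal rule
`⟦N+1 choose t+1⟧ = q^{N-t} ⟦N choose t⟧ + ⟦N choose t+1⟧`; applying the ordinary `q`-Pascal rule
to `⟦κ+1+i choose κ+1⟧` gives `A(κ+1, r, δ+1) = A(κ, r+1, δ+1) - q^{r-δ} A(κ+1, r, δ)`,
and the dual rule again closes the induction on `κ` and `δ`.
-/

lemma gaussPoly_zero_right (N : ℕ) : gaussPoly N 0 = 1 := by
  cases N <;> rfl

lemma gaussPoly_succ_succ (N t : ℕ) :
    gaussPoly (N + 1) (t + 1) = gaussPoly N t + T (2 * ((t : ℤ) + 1)) * gaussPoly N (t + 1) :=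
  rfl

lemma gaussPoly_eq_zero_of_lt {N t : ℕ} (h : N < t) : gaussPoly N t = 0 := by
  induction N generalizing t with
  | zero => obtain ⟨t, rfl⟩ := Nat.exists_eq_add_of_lt h; rfl
  | succ N ih =>
    obtain ⟨t, rfl⟩ : ∃ s, t = s + 1 := ⟨t - 1, by omega⟩
    rw [gaussPoly_succ_succ, ih (by omega), ih (by omega), mul_zero, add_zero]

lemma gaussPoly_self (N : ℕ) : gaussPoly N N = 1 := by
  induction N with
  | zero => rfl
  | succ N ih =>
    rw [gaussPoly_succ_succ, ih, gaussPoly_eq_zero_of_lt N.lt_succ_self, mul_zero, add_zero]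

lemma gaussPoly_succ_succ' (N t : ℕ) :
    gaussPoly (N + 1) (t + 1) = T (2 * ((N : ℤ) - t)) * gaussPoly N t + gaussPoly N (t + 1) := by
  induction N generalizing t with
  | zero => cases t <;> simp [gaussPoly]
  | succ N ih =>
    rw [gaussPoly_succ_succ (N + 1)]
    cases t with
    | zero =>
      have dual₁ := ih 0
      have pascal₁ := gaussPoly_succ_succ N 0
      have hT : (T 2 * T (2 * (N : ℤ)) : LaurentPolynomial ℤ) = T (2 * ((N : ℤ) + 1)) := by
        rw [← T_add]; ring_nf
      simp only [gaussPoly_zero_right, Nat.cast_zero, sub_zero, zero_add, mul_one]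
        at dual₁ pascal₁ ⊢
      push_cast
      linear_combination T 2 * dual₁ - pascal₁ + hT
    | succ s =>
      -- expand by the dual rule on the left, the ordinary one on the right; both give `q^{N+1}`
      have dual₁ := ih s
      have pascal₁ := gaussPoly_succ_succ N s
      have dual₂ := ih (s + 1)
      have pascal₂ := gaussPoly_succ_succ N (s + 1)
      have hT₁ : (T (2 * ((s : ℤ) + 1 + 1)) * T (2 * ((N : ℤ) - (s + 1))) : LaurentPolynomial ℤ)
          = T (2 * ((N : ℤ) + 1)) := by
        rw [← T_add]; ring_nf
      have hT₂ : (T (2 * ((N : ℤ) - s)) * T (2 * ((s : ℤ) + 1)) : LaurentPolynomial ℤ)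
          = T (2 * ((N : ℤ) + 1)) := by
        rw [← T_add]; ring_nf
      push_cast at dual₁ dual₂ pascal₁ pascal₂ ⊢
      rw [show 2 * ((N : ℤ) + 1 - (s + 1)) = 2 * (N - s) by ring]
      linear_combination dual₁ - T (2 * ((N : ℤ) - s)) * pascal₁
        + T (2 * ((s : ℤ) + 1 + 1)) * dual₂ - pascal₂
        + gaussPoly N (s + 1) * (hT₁ - hT₂)

noncomputable def altGaussSum (κ r δ : ℕ) : LaurentPolynomial ℤ :=
  ∑ i ∈ Finset.range (δ + 1), (-1) ^ i * T (2 * i * ((r : ℤ) - δ) + i * (i + 1)) *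
    gaussPoly (κ + i) κ * gaussPoly (κ + 1 + r) (δ - i)

lemma altGaussSum_zero_right (κ r : ℕ) : altGaussSum κ r 0 = 1 := by
  simp [altGaussSum, gaussPoly_self, gaussPoly_zero_right]

lemma altGaussSum_zero_left (r δ : ℕ) : altGaussSum 0 r δ = gaussPoly r δ := by
  set g : ℕ → LaurentPolynomial ℤ := fun i =>
    (-1) ^ i * T (2 * i * ((r : ℤ) - δ) + i * (i + 1)) * gaussPoly r (δ - i) with hg
  have telescope : ∀ i ∈ Finset.range δ,
      (-1) ^ i * T (2 * i * ((r : ℤ) - δ) + i * (i + 1)) * gaussPoly (0 + i) 0 *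
        gaussPoly (0 + 1 + r) (δ - i) = g i - g (i + 1) := by
    intro i hi
    have hδ : δ - i = δ - (i + 1) + 1 := by rw [Finset.mem_range] at hi; omega
    have hT : (T (2 * i * ((r : ℤ) - δ) + i * (i + 1)) * T (2 * ((r : ℤ) - ↑(δ - (i + 1))))
        : LaurentPolynomial ℤ) = T (2 * ↑(i + 1) * ((r : ℤ) - δ) + ↑(i + 1) * (↑(i + 1) + 1)) := by
      rw [← T_add]
      congr 1
      rw [Finset.mem_range] at hi
      push_cast [Nat.cast_sub hi]
      ring
    rw [hδ, zero_add, gaussPoly_zero_right, Nat.add_comm 1 r, gaussPoly_succ_succ', ← hδ, hg]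
    linear_combination (-1) ^ i * gaussPoly r (δ - (i + 1)) * hT
  rw [altGaussSum, Finset.sum_range_succ, Finset.sum_congr rfl telescope, Finset.sum_range_sub']
  simp [hg, gaussPoly_zero_right]

lemma altGaussSum_succ_succ (κ r d : ℕ) :
    altGaussSum (κ + 1) r (d + 1)
      = altGaussSum κ (r + 1) (d + 1) - T (2 * ((r : ℤ) - d)) * altGaussSum (κ + 1) r d := by
  set B : ℕ → LaurentPolynomial ℤ := fun i =>
    (-1) ^ i * T (2 * i * ((r : ℤ) - ↑(d + 1)) + i * (i + 1)) *
      gaussPoly (κ + i) (κ + 1) * gaussPoly (κ + 1 + 1 + r) (d + 1 - i) with hB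
  have split : altGaussSum (κ + 1) r (d + 1)
      = altGaussSum κ (r + 1) (d + 1) + ∑ i ∈ Finset.range (d + 1 + 1), B i := by
    rw [altGaussSum, altGaussSum, ← Finset.sum_add_distrib]
    refine Finset.sum_congr rfl fun i _ => ?_
    have hT : (T (2 * i * ((r : ℤ) - ↑(d + 1)) + i * (i + 1)) * T (2 * (↑(κ + i) - (κ : ℤ)))
        : LaurentPolynomial ℤ) = T (2 * i * (↑(r + 1) - ↑(d + 1)) + i * (i + 1)) := by
      rw [← T_add]; congr 1; push_cast; ring
    rw [hB, Nat.add_right_comm κ 1 i, gaussPoly_succ_succ',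
      show κ + 1 + (r + 1) = κ + 1 + 1 + r by omega]
    linear_combination (-1) ^ i * gaussPoly (κ + i) κ * gaussPoly (κ + 1 + 1 + r) (d + 1 - i) * hT
  have shift : ∑ i ∈ Finset.range (d + 1 + 1), B i
      = -(T (2 * ((r : ℤ) - d)) * altGaussSum (κ + 1) r d) := by
    rw [Finset.sum_range_succ', hB, altGaussSum, Finset.mul_sum, ← Finset.sum_neg_distrib]
    simp only [gaussPoly_eq_zero_of_lt (Nat.lt_succ_self κ), mul_zero, zero_mul, add_zero]
    refine Finset.sum_congr rfl fun i _ => ?_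
    have hT : (T (2 * ((r : ℤ) - d)) * T (2 * i * ((r : ℤ) - d) + i * (i + 1))
        : LaurentPolynomial ℤ) = T (2 * ↑(i + 1) * ((r : ℤ) - ↑(d + 1)) + ↑(i + 1) * (↑(i + 1) + 1)) := by
      rw [← T_add]; congr 1; push_cast; ring
    rw [Nat.add_sub_add_right, ← Nat.add_assoc, Nat.add_right_comm κ i 1]
    linear_combination
      (-1) ^ i * gaussPoly (κ + 1 + i) (κ + 1) * gaussPoly (κ + 1 + 1 + r) (d - i) * hT
  rw [split, shift, ← sub_eq_add_neg]

theorem altGaussSum_eq (κ r δ : ℕ) : altGaussSum κ r δ = gaussPoly r δ := by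
  induction κ generalizing r δ with
  | zero => exact altGaussSum_zero_left r δ
  | succ κ ih =>
    induction δ with
    | zero => rw [altGaussSum_zero_right, gaussPoly_zero_right]
    | succ d ihd =>
      rw [altGaussSum_succ_succ, ih, ihd, gaussPoly_succ_succ']
      ring

theorem sgauss_alternating_sum (κ r δ : ℕ) :
    ∑ i ∈ Finset.range (δ + 1), ((-1) ^ i : LaurentPolynomial ℤ) * T (i * (r : ℤ)) *
        sgauss (κ + i) κ * sgauss (κ + 1 + r) (δ - i)
      = T (-(((κ + 1 : ℕ) : ℤ) * δ)) * sgauss r δ := by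
  calc _ = T (-((δ : ℤ) * (↑(κ + 1 + r) - δ))) * altGaussSum κ r δ := by
        rw [altGaussSum, Finset.mul_sum]
        refine Finset.sum_congr rfl fun i hi => ?_
        have hT : (T (i * (r : ℤ)) * T (-((κ : ℤ) * (↑(κ + i) - κ))) *
              T (-(↑(δ - i) * (↑(κ + 1 + r) - ↑(δ - i)))) : LaurentPolynomial ℤ)
            = T (-((δ : ℤ) * (↑(κ + 1 + r) - δ))) * T (2 * i * ((r : ℤ) - δ) + i * (i + 1)) := by
          rw [← T_add, ← T_add, ← T_add]
          congr 1
          rw [Finset.mem_range] at hi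
          push_cast [Nat.cast_sub (Nat.le_of_lt_succ hi)]
          ring
        rw [sgauss, sgauss]
        linear_combination (-1) ^ i * gaussPoly (κ + i) κ * gaussPoly (κ + 1 + r) (δ - i) * hT
    _ = _ := by
        rw [altGaussSum_eq, sgauss, ← mul_assoc, ← T_add]
        congr 2
        push_cast
        ring

/-- For integers `m ≥ k ≥ 1` and `δ ≥ 0`, in `ℤ[v, v⁻¹]`:
`∑_{i=0}^{δ} (−1)^i v^{i(m−k)} [k−1+i choose k−1] [m choose δ−i] = v^{−kδ} [m−k choose δ]`. -/
theorem gauss_alternating_sum_identity (m k δ : ℕ) (hk : 1 ≤ k) (hkm : k ≤ m) :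
    ∑ i ∈ Finset.range (δ + 1),
        ((-1) ^ i : LaurentPolynomial ℤ) * T ((i : ℤ) * ((m : ℤ) - (k : ℤ))) *
          sgauss (k - 1 + i) (k - 1) * sgauss m (δ - i)
      = T (-((k : ℤ) * (δ : ℤ))) * sgauss (m - k) δ := by
  obtain ⟨κ, rfl⟩ : ∃ κ, k = κ + 1 := ⟨k - 1, by omega⟩
  obtain ⟨r, rfl⟩ : ∃ r, m = κ + 1 + r := ⟨m - (κ + 1), by omega⟩
  have hr : ((κ + 1 + r : ℕ) : ℤ) - ((κ + 1 : ℕ) : ℤ) = r := by push_cast; ring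
  rw [Nat.add_sub_cancel, Nat.add_sub_cancel_left, hr]
  exact sgauss_alternating_sum κ r δ
end

section
/- Every Laurent polynomial h ∈ ℤ[v, v⁻¹] has a unique decomposition h = h′ + h″ where h′ is fixed by the bar involution (i.e. h′(v⁻¹) = h′(v)) and h″ ∈ v⁻¹ℤ[v⁻¹]. -/
open LaurentPolynomial

/-!
Bar invariance says exactly that the coefficient of `v^{-n}` equals that of `v^n`, and an element
of `v⁻¹ℤ[v⁻¹]` has no coefficients in degrees `≥ 0`. Hence in `h = h′ + h″` the part `h′` must have
coefficient `h_{|n|}` in degree `n`; conversely this `h′` is bar invariant and `h - h′` has no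
coefficients in degrees `≥ 0`.
-/

namespace LaurentPolynomial

variable {R : Type*}

section Semiring

variable [Semiring R]

noncomputable def symmetrizeNonneg (p : R[T;T⁻¹]) : R[T;T⁻¹] :=
  AddMonoidAlgebra.ofCoeff <| Finsupp.onFinset (p.coeff.support ∪ p.coeff.support.map (Equiv.neg ℤ))
    (fun n => p.coeff |n|) fun n hn => by
      rcases abs_choice n with h | h <;> rw [h] at hn <;> simp [hn]

@[simp]
lemma coeff_symmetrizeNonneg (p : R[T;T⁻¹]) (n : ℤ) :
    (symmetrizeNonneg p).coeff n = p.coeff |n| := rfl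

end Semiring

section CommSemiring

variable [CommSemiring R]

lemma invert_eq_self_iff {p : R[T;T⁻¹]} : invert p = p ↔ ∀ n, p.coeff (-n) = p.coeff n := by
  simp only [AddMonoidAlgebra.ext_iff, Finsupp.ext_iff, invert_apply]

lemma eq_of_invert_eq_self_of_coeff_eq {p q : R[T;T⁻¹]} (hp : invert p = p) (hq : invert q = q)
    (h : ∀ n, 0 ≤ n → p.coeff n = q.coeff n) : p = q := by
  ext n
  rcases le_total 0 n with hn | hn
  · exact h n hn
  · rw [← invert_eq_self_iff.mp hp n, ← invert_eq_self_iff.mp hq n]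
    exact h (-n) (neg_nonneg.mpr hn)

lemma invert_symmetrizeNonneg (p : R[T;T⁻¹]) : invert (symmetrizeNonneg p) = symmetrizeNonneg p :=
  invert_eq_self_iff.mpr fun n => by simp only [coeff_symmetrizeNonneg, abs_neg]

end CommSemiring

lemma coeff_sub_symmetrizeNonneg_of_nonneg [Ring R] (p : R[T;T⁻¹]) {n : ℤ} (hn : 0 ≤ n) :
    (p - symmetrizeNonneg p).coeff n = 0 := by
  simp [abs_of_nonneg hn]

end LaurentPolynomial

lemma inNegPart_iff {q : LaurentPolynomial ℤ} : InNegPart q ↔ ∀ n, 0 ≤ n → q.coeff n = 0 :=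
  forall_congr' fun n => by rw [not_imp_comm, not_lt]

/-- Every Laurent polynomial `h ∈ ℤ[v, v⁻¹]` has a unique decomposition `h = h′ + h″` with
`h′` fixed by the bar involution and `h″ ∈ v⁻¹ℤ[v⁻¹]`. -/
theorem bar_invariant_decomposition (h : LaurentPolynomial ℤ) :
    ∃! p : LaurentPolynomial ℤ × LaurentPolynomial ℤ,
      h = p.1 + p.2 ∧ bar p.1 = p.1 ∧ InNegPart p.2 := by
  refine ⟨(symmetrizeNonneg h, h - symmetrizeNonneg h),
    ⟨(add_sub_cancel _ _).symm, invert_symmetrizeNonneg h,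
      inNegPart_iff.mpr fun n => coeff_sub_symmetrizeNonneg_of_nonneg h⟩, ?_⟩
  rintro ⟨p, q⟩ ⟨rfl, hp, hq⟩
  have hp' : p = symmetrizeNonneg (p + q) :=
    eq_of_invert_eq_self_of_coeff_eq hp (invert_symmetrizeNonneg _) fun n hn => by
      simp [abs_of_nonneg hn, inNegPart_iff.mp hq n hn]
  exact Prod.ext hp' (by rw [← hp', add_sub_cancel_left])
end
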